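/- arXiv:1501.06862 — 2 statements merged into one kernel-verified Lean document; each statement's English description precedes it below -/
import Mathlib

section
/- Let h₁, …, hₙ ∈ DH be such that for each i the polynomial Nᵢ := (t − hᵢ)·(t − h̄ᵢ) has only real scalar coefficients. Then the norm polynomial of the product C = (t − h₁)·(t − h₂)⋯(t − hₙ) satisfies C·C̄ = N₁·N₂⋯Nₙ. -/
open Polynomial
noncomputable section

/-- The dual quaternions: dual numbers over the real quaternions. -/
abbrev DH : Type := DualNumber (Quaternion ℝ)

/-- Dual quaternion conjugation: the conjugate of `p + εq` is `p̄ + εq̄`. -/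
def dconj (h : DH) : DH :=
  TrivSqZeroExt.inl (star (TrivSqZeroExt.fst h)) + TrivSqZeroExt.inr (star (TrivSqZeroExt.snd h))

/-- Coefficientwise conjugation of a dual quaternion polynomial. -/
def pconj (P : Polynomial DH) : Polynomial DH :=
  P.sum fun n a => Polynomial.monomial n (dconj a)

/-- The quaternion unit i. -/
def qi : Quaternion ℝ := ⟨0,1,0,0⟩
/-- The quaternion unit j. -/
def qj : Quaternion ℝ := ⟨0,0,1,0⟩
/-- The quaternion unit k. -/
def qk : Quaternion ℝ := ⟨0,0,0,1⟩

/-- A dual quaternion polynomial is real if all its coefficients are real scalars. -/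
def IsRealPoly (P : Polynomial DH) : Prop :=
  ∃ r : Polynomial ℝ, P = r.map (algebraMap ℝ DH)

/-- The primal part of a dual quaternion polynomial. -/
def primalPart (C : Polynomial DH) : Polynomial (Quaternion ℝ) :=
  C.sum fun n a => Polynomial.monomial n (TrivSqZeroExt.fst a)

/-!
Conjugation reverses products, so for `C = P·C'` one gets `C·C̄ = P·(C'·C̄')·P̄`. By induction
`C'·C̄'` is a product of norm polynomials of the factors, hence real, hence central in `DH[t]`;
moving it past `P̄` gives `C·C̄ = (P·P̄)·(C'·C̄')`.
-/

@[simp] lemma dconj_fst (a : DH) : (dconj a).fst = star a.fst := by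
  simp [dconj]

@[simp] lemma dconj_snd (a : DH) : (dconj a).snd = star a.snd := by
  simp [dconj]

@[simp] lemma dconj_zero : dconj 0 = 0 := by ext <;> simp

@[simp] lemma dconj_one : dconj 1 = 1 := by ext <;> simp

@[simp] lemma dconj_add (a b : DH) : dconj (a + b) = dconj a + dconj b := by ext <;> simp

@[simp] lemma dconj_neg (a : DH) : dconj (-a) = -dconj a := by ext <;> simp

lemma dconj_mul (a b : DH) : dconj (a * b) = dconj b * dconj a := by
  ext <;> simp [smul_eq_mul, MulOpposite.smul_eq_mul_unop, add_comm]

def dconjOpRingHom : DH →+* DHᵐᵒᵖ where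
  toFun a := MulOpposite.op (dconj a)
  map_one' := by simp
  map_mul' a b := by simp [dconj_mul]
  map_zero' := by simp
  map_add' a b := by simp

@[simp] lemma coeff_pconj (P : DH[X]) (n : ℕ) : (pconj P).coeff n = dconj (P.coeff n) := by
  simp only [pconj, Polynomial.sum_def, finsetSum_coeff, coeff_monomial, Finset.sum_ite_eq']
  split_ifs with hn
  · rfl
  · rw [notMem_support_iff.mp hn, dconj_zero]

-- Through `R[X]ᵐᵒᵖ ≃+* Rᵐᵒᵖ[X]`, `pconj` is a ring anti-homomorphism, so `pconj_mul` is `map_mul`.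
lemma pconj_eq_unop_opRingEquiv_symm_map (P : DH[X]) :
    pconj P = ((opRingEquiv DH).symm (P.map dconjOpRingHom)).unop := by
  ext1 n
  apply MulOpposite.op_injective
  rw [coeff_pconj, ← coeff_opRingEquiv, RingEquiv.apply_symm_apply, coeff_map]
  rfl

lemma pconj_mul (P Q : DH[X]) : pconj (P * Q) = pconj Q * pconj P := by
  simp only [pconj_eq_unop_opRingEquiv_symm_map, Polynomial.map_mul, map_mul,
    MulOpposite.unop_mul]

lemma pconj_one : pconj 1 = 1 := by
  simp [pconj_eq_unop_opRingEquiv_symm_map]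

lemma pconj_X_sub_C (a : DH) : pconj (X - C a) = X - C (dconj a) := by
  ext1 n
  rcases n with _ | _ | n <;> simp [coeff_X, coeff_C]

theorem Polynomial.commute_map_algebraMap {R A : Type*} [CommSemiring R] [Semiring A] [Algebra R A]
    (r : R[X]) (Q : A[X]) : Commute (r.map (algebraMap R A)) Q := by
  induction r using Polynomial.induction_on' with
  | add p q hp hq => simpa only [Polynomial.map_add] using hp.add_left hq
  | monomial n a =>
    rw [map_monomial, ← C_mul_X_pow_eq_monomial, ← algebraMap_apply]
    exact (Algebra.commute_algebraMap_left a Q).mul_left (commute_X_pow Q n)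

lemma isRealPoly_iff_mem_rangeS (P : DH[X]) :
    IsRealPoly P ↔ P ∈ (mapRingHom (algebraMap ℝ DH)).rangeS := by
  simp only [IsRealPoly, RingHom.mem_rangeS, coe_mapRingHom, eq_comm]

lemma IsRealPoly.list_prod {L : List DH[X]} (hL : ∀ P ∈ L, IsRealPoly P) : IsRealPoly L.prod :=
  (isRealPoly_iff_mem_rangeS _).2 <|
    list_prod_mem fun P hP => (isRealPoly_iff_mem_rangeS P).1 (hL P hP)

lemma IsRealPoly.commute {P : DH[X]} (hP : IsRealPoly P) (Q : DH[X]) : Commute P Q := by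
  obtain ⟨r, rfl⟩ := hP
  exact commute_map_algebraMap r Q

theorem list_prod_mul_pconj {L : List DH[X]} (hL : ∀ P ∈ L, IsRealPoly (P * pconj P)) :
    L.prod * pconj L.prod = (L.map fun P => P * pconj P).prod := by
  induction L with
  | nil => simp [pconj_one]
  | cons P L ih =>
    have hL' : ∀ Q ∈ L, IsRealPoly (Q * pconj Q) := fun Q hQ => hL Q (List.mem_cons_of_mem P hQ)
    have hreal : IsRealPoly (L.prod * pconj L.prod) := by
      rw [ih hL']
      exact IsRealPoly.list_prod (by simpa using hL')
    calc (P :: L).prod * pconj (P :: L).prod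
        = P * (L.prod * pconj L.prod) * pconj P := by
          simp only [List.prod_cons, pconj_mul, mul_assoc]
      _ = P * pconj P * (L.prod * pconj L.prod) := by
          rw [mul_assoc, (hreal.commute _).eq, mul_assoc]
      _ = ((P :: L).map fun P => P * pconj P).prod := by
          rw [ih hL', List.map_cons, List.prod_cons]

/-- If each linear factor `t - hᵢ` has real norm polynomial
`Nᵢ = (t-hᵢ)(t-h̄ᵢ)`, then the norm polynomial of the product
`C = (t-h₁)⋯(t-hₙ)` is `C·C̄ = N₁⋯Nₙ`. -/
theorem norm_of_product_of_linear_motion_polynomials (n : ℕ) (h : Fin n → DH)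
    (hreal : ∀ i, IsRealPoly ((X - Polynomial.C (h i)) * (X - Polynomial.C (dconj (h i))))) :
    ((List.ofFn fun i => X - Polynomial.C (h i)).prod) *
        pconj ((List.ofFn fun i => X - Polynomial.C (h i)).prod) =
      (List.ofFn fun i =>
        (X - Polynomial.C (h i)) * (X - Polynomial.C (dconj (h i)))).prod := by
  have hnorm := list_prod_mul_pconj (L := List.ofFn fun i => X - C (h i))
    (by simpa [List.forall_mem_ofFn_iff, pconj_X_sub_C] using hreal)
  simpa [List.map_ofFn, Function.comp_def, pconj_X_sub_C] using hnorm
end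
end

section
/- Let a ∈ ℝ with a > 0 and suppose h₁, h₂ ∈ DH satisfy (t − h₁)·(t − h₂) = t² + 1 + ε(a·j·t + a·i). Then there exist λ, μ ∈ ℝ such that h₁ = k + ε(λ·i + (μ − a)·j) and h₂ = −k − ε(λ·i + μ·j); that is, every factorization of the circular translation into two linear factors is of this form. -/
/-!
Comparing coefficients, `h₁ + h₂ = -εaj` and `h₁h₂ = 1 + εai`. Writing `h₁ = p + εq`, the
primal part gives `p² = -1`, so `p` is a pure unit quaternion, and the dual part gives
`pq + qp = -a·pj - a·i`. Pairing the vector part of this equation with the unit vector `p` gives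
`2·Re q = -a·p₁`; the remaining components then force `p = k`, `Re q = 0` and `q₃ = 0`, and
`h₂ = -εaj - h₁`.
-/

open Polynomial
noncomputable section

open scoped Quaternion

theorem Polynomial.X_sub_C_mul_X_sub_C {R : Type*} [Ring R] (a b : R) :
    (X - C a) * (X - C b) = X ^ 2 - C (a + b) * X + C (a * b) := by
  rw [sub_mul, mul_sub, mul_sub, X_mul_C, C_add, C_mul, sq]
  noncomm_ring

theorem Polynomial.X_sub_C_mul_X_sub_C_eq_iff {R : Type*} [Ring R] (a b s p : R) :
    (X - C a) * (X - C b) = X ^ 2 + C s * X + C p ↔ a + b = -s ∧ a * b = p := by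
  rw [X_sub_C_mul_X_sub_C, sub_eq_add_neg, ← neg_mul, ← C_neg]
  refine ⟨fun h => ⟨?_, ?_⟩, fun ⟨hs, hp⟩ => by rw [hs, neg_neg, hp]⟩
  · rw [eq_neg_iff_add_eq_zero, ← neg_eq_iff_add_eq_zero]
    simpa [coeff_X_pow, coeff_C] using congrArg (coeff · 1) h
  · simpa [coeff_X_pow, coeff_C] using congrArg (coeff · 0) h

theorem DualNumber.fst_mul_self_and_anticomm_of_add_of_mul {R : Type*} [Ring R]
    {x y : DualNumber R} {s u v : R} (hsum : x + y = -TrivSqZeroExt.inr s)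
    (hprod : x * y = TrivSqZeroExt.inl u + TrivSqZeroExt.inr v) :
    x.fst * x.fst = -u ∧ x.fst * x.snd + x.snd * x.fst = -(x.fst * s) - v := by
  obtain rfl : y = -TrivSqZeroExt.inr s - x := eq_sub_of_add_eq' hsum
  have hfst := congrArg TrivSqZeroExt.fst hprod
  have hsnd := congrArg TrivSqZeroExt.snd hprod
  simp only [TrivSqZeroExt.fst_mul, TrivSqZeroExt.snd_mul, TrivSqZeroExt.fst_add,
    TrivSqZeroExt.fst_sub, TrivSqZeroExt.fst_neg, TrivSqZeroExt.fst_inl, TrivSqZeroExt.fst_inr,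
    TrivSqZeroExt.snd_add, TrivSqZeroExt.snd_sub, TrivSqZeroExt.snd_neg, TrivSqZeroExt.snd_inl,
    TrivSqZeroExt.snd_inr, smul_eq_mul, MulOpposite.smul_eq_mul_unop, MulOpposite.unop_op,
    add_zero, zero_add, neg_zero, zero_sub]
    at hfst hsnd
  constructor
  · rw [← hfst]; noncomm_ring
  · rw [← hsnd]; noncomm_ring

theorem Quaternion.re_eq_zero_and_normSq_eq_one_of_mul_self_eq_neg_one {R : Type*} [CommRing R]
    [LinearOrder R] [IsStrictOrderedRing R] {p : ℍ[R]} (hp : p * p = -1) :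
    p.re = 0 ∧ normSq p = 1 := by
  have hn : normSq p * normSq p = 1 := by rw [← map_mul, hp, normSq_neg, map_one]
  have hn1 : normSq p = 1 := by nlinarith [normSq_nonneg (a := p)]
  refine ⟨sq_eq_neg_normSq.1 ?_, hn1⟩
  rw [sq, hp, hn1, coe_one]

theorem eq_qk_and_mem_span_qi_qj_of_anticomm_eq {a : ℝ} (ha : a ≠ 0) {p q : ℍ[ℝ]}
    (hp : p * p = -1) (hq : p * q + q * p = -(p * (a • qj)) - a • qi) :
    p = qk ∧ q = q.imI • qi + q.imJ • qj := by
  obtain ⟨hre, hn⟩ := Quaternion.re_eq_zero_and_normSq_eq_one_of_mul_self_eq_neg_one hp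
  rw [Quaternion.normSq_def', hre] at hn
  rw [Quaternion.ext_iff] at hq
  simp only [Quaternion.re_add, Quaternion.imI_add, Quaternion.imJ_add, Quaternion.imK_add,
    Quaternion.re_sub, Quaternion.imI_sub, Quaternion.imJ_sub, Quaternion.imK_sub,
    Quaternion.re_neg, Quaternion.imI_neg, Quaternion.imJ_neg, Quaternion.imK_neg,
    Quaternion.re_mul, Quaternion.imI_mul, Quaternion.imJ_mul, Quaternion.imK_mul,
    Quaternion.re_smul, Quaternion.imI_smul, Quaternion.imJ_smul, Quaternion.imK_smul,
    smul_eq_mul, hre] at hq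
  simp only [qi, qj] at hq
  obtain ⟨hq_re, hq_i, hq_j, hq_k⟩ := hq
  have ht : 2 * q.re = -(a * p.imI) := by
    linear_combination p.imI * hq_i + p.imJ * hq_j + p.imK * hq_k - 2 * q.re * hn
  have hx : p.imI = 0 := by
    have : a * p.imI ^ 3 = 0 := by
      linear_combination hq_k - p.imK * ht - p.imI * (hq_i - p.imI * ht)
    simpa [ha] using this
  have hz : p.imK = 1 := by
    have : a * (p.imK - 1) = 0 := by linear_combination -(hq_i - p.imI * ht) - a * p.imI * hx
    simpa [ha, sub_eq_zero] using this
  have hy : p.imJ = 0 := by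
    have : p.imJ ^ 2 = 0 := by linear_combination hn - p.imI * hx - (p.imK + 1) * hz
    simpa using this
  have hqre : q.re = 0 := by simpa [hx, ha] using ht
  have hqk : q.imK = 0 := by
    rw [hx, hy, hz] at hq_re
    linarith
  constructor
  · ext <;> simp [qk, hre, hx, hy, hz]
  · ext <;> simp only [Quaternion.re_add, Quaternion.imI_add, Quaternion.imJ_add,
      Quaternion.imK_add, Quaternion.re_smul, Quaternion.imI_smul, Quaternion.imJ_smul,
      Quaternion.imK_smul, smul_eq_mul] <;> simp [qi, qj, hqre, hqk]

/-- Every factorization `(t-h₁)(t-h₂)` of the circular translation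
`t² + 1 + ε(a·j·t + a·i)` has the form `h₁ = k + ε(λ·i + (μ-a)·j)`,
`h₂ = -k - ε(λ·i + μ·j)` for some `λ, μ ∈ ℝ`. -/
theorem circular_translation_factorizations_classified (a : ℝ) (ha : a > 0) (h₁ h₂ : DH)
    (hfac : ((X : Polynomial DH) - Polynomial.C h₁) * (X - Polynomial.C h₂) =
      (X : Polynomial DH) ^ 2 + 1 +
        Polynomial.C (TrivSqZeroExt.inr (a • qj)) * X +
        Polynomial.C (TrivSqZeroExt.inr (a • qi))) :
    ∃ lam mu : ℝ,
      h₁ = TrivSqZeroExt.inl qk + TrivSqZeroExt.inr (lam • qi + (mu - a) • qj) ∧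
      h₂ = -(TrivSqZeroExt.inl qk) - TrivSqZeroExt.inr (lam • qi + mu • qj) := by
  have hquad : (X : Polynomial DH) ^ 2 + 1 + C (TrivSqZeroExt.inr (a • qj)) * X +
      C (TrivSqZeroExt.inr (a • qi)) = X ^ 2 + C (TrivSqZeroExt.inr (a • qj)) * X +
      C (TrivSqZeroExt.inl 1 + TrivSqZeroExt.inr (a • qi)) := by
    rw [C_add, TrivSqZeroExt.inl_one, C_1]
    abel
  obtain ⟨hsum, hprod⟩ := (X_sub_C_mul_X_sub_C_eq_iff h₁ h₂ _ _).1 (hfac.trans hquad)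
  obtain ⟨hp, hq⟩ := DualNumber.fst_mul_self_and_anticomm_of_add_of_mul hsum hprod
  obtain ⟨hpk, hqij⟩ := eq_qk_and_mem_span_qi_qj_of_anticomm_eq ha.ne' hp hq
  set lam := h₁.snd.imI
  set nu := h₁.snd.imJ
  have hh₁ : h₁ = TrivSqZeroExt.inl qk + TrivSqZeroExt.inr (lam • qi + nu • qj) := by
    rw [← hpk, ← hqij, TrivSqZeroExt.inl_fst_add_inr_snd_eq]
  refine ⟨lam, nu + a, by rwa [add_sub_cancel_right], ?_⟩
  rw [eq_sub_of_add_eq' hsum, hh₁, add_smul]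
  simp only [TrivSqZeroExt.inr_add]
  abel
end
end
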